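/- Let M be maximally monotone on Z and C z = Qz + c with Q self-adjoint positive bounded nonzero, ξ = 1/‖Q‖, and suppose the zero set of M + C is nonempty. For γ ∈ (0, ξ) and any sequence (ρ⁽ⁱ⁾) in [0,2] with Σᵢ ρ⁽ⁱ⁾(2 − ρ⁽ⁱ⁾) = +∞, the relaxed forward–backward iteration z⁽ⁱ⁺½⁾ = J_{γM}(z⁽ⁱ⁾ − γC z⁽ⁱ⁾), z⁽ⁱ⁺¹⁾ = z⁽ⁱ⁾ + ρ⁽ⁱ⁾(z⁽ⁱ⁺½⁾ − z⁽ⁱ⁾) converges weakly to a zero of M + C. -/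

import Mathlib

/-!
With `P = 1 - γ Q`, which is self-adjoint and coercive because `γ ‖Q‖ < 1`, the
forward–backward operator `T = J ∘ (1 - γ C)` is firmly nonexpansive for the inner product
`⟪x, P y⟫`, and its fixed points are the zeros of `M + C`. In that geometry the iteration is a
relaxed Krasnosel'skiĭ–Mann iteration of `T`: it is Fejér monotone with respect to `Fix T`, and
since `‖z i - T (z i)‖` decreases while `∑ ρ i (2 - ρ i) ‖z i - T (z i)‖²` is finite, the
residual tends to `0`. By demiclosedness every weak cluster point is then a fixed point, and
Opial's argument turns this into weak convergence. The inner product `⟪x, P y⟫` is equivalent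
to the original one, so both give the same weak convergence.
-/

open RealInnerProductSpace Filter

/-- A set-valued operator `M : Z → 2^Z` is monotone. -/
def SetValuedMonotone {Z : Type*} [NormedAddCommGroup Z] [InnerProductSpace ℝ Z]
    (M : Z → Set Z) : Prop :=
  ∀ ⦃x x' u u' : Z⦄, u ∈ M x → u' ∈ M x' → (0 : ℝ) ≤ ⟪x - x', u - u'⟫

/-- A set-valued operator is maximally monotone. -/
def SetValuedMaximallyMonotone {Z : Type*} [NormedAddCommGroup Z] [InnerProductSpace ℝ Z]
    (M : Z → Set Z) : Prop :=
  SetValuedMonotone M ∧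
    ∀ N : Z → Set Z, SetValuedMonotone N → (∀ x, M x ⊆ N x) → ∀ x, N x ⊆ M x

open Function Topology

theorem summable_of_le_sub_succ {a D : ℕ → ℝ} (ha : ∀ n, 0 ≤ a n) (hD : ∀ n, 0 ≤ D n)
    (h : ∀ n, a n ≤ D n - D (n + 1)) : Summable a :=
  summable_of_sum_range_le ha fun n =>
    calc ∑ i ∈ Finset.range n, a i ≤ ∑ i ∈ Finset.range n, (D i - D (i + 1)) :=
          Finset.sum_le_sum fun i _ => h i
      _ = D 0 - D n := Finset.sum_range_sub' D n
      _ ≤ D 0 := sub_le_self _ (hD n)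

theorem Antitone.tendsto_zero_of_summable_mul {a w : ℕ → ℝ} (ha : Antitone a)
    (ha₀ : ∀ n, 0 ≤ a n) (hw : ∀ n, 0 ≤ w n) (hdiv : ¬ Summable w)
    (hwa : Summable fun n => w n * a n) : Tendsto a atTop (𝓝 0) := by
  have hbdd : BddBelow (Set.range a) := ⟨0, Set.forall_mem_range.2 ha₀⟩
  have hlim := tendsto_atTop_ciInf ha hbdd
  suffices h : ⨅ n, a n = 0 by rwa [h] at hlim
  by_contra hne
  have hpos : 0 < ⨅ n, a n := (le_ciInf ha₀).lt_of_ne' hne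
  refine hdiv (Summable.of_nonneg_of_le hw (fun n => ?_) (hwa.div_const (⨅ n, a n)))
  rw [le_div_iff₀ hpos]
  exact mul_le_mul_of_nonneg_left (ciInf_le hbdd n) (hw n)

section WeakConvergence

variable {E F : Type*} [NormedAddCommGroup E] [InnerProductSpace ℝ E]
  [NormedAddCommGroup F] [InnerProductSpace ℝ F] {ι : Type*}

def WeakTendsto (x : ι → E) (l : Filter ι) (u : E) : Prop :=
  ∀ w, Tendsto (fun i => ⟪x i, w⟫) l (𝓝 ⟪u, w⟫)

theorem WeakTendsto.map [CompleteSpace E] {x : ι → E} {l : Filter ι} {u : E}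
    (h : WeakTendsto x l u) (A : E →L[ℝ] F) : WeakTendsto (A ∘ x) l (A u) := by
  intro w
  set v := (InnerProductSpace.toDual ℝ E).symm ((innerSL ℝ w).comp A)
  have hv : ∀ y, ⟪A y, w⟫ = ⟪y, v⟫ := fun y => by
    rw [real_inner_comm v y, InnerProductSpace.toDual_symm_apply, ContinuousLinearMap.comp_apply,
      innerSL_apply_apply, real_inner_comm]
  simpa only [comp_apply, hv] using h v

theorem exists_weakTendsto_of_norm_le [CompleteSpace E] (U : Ultrafilter ι) {x : ι → E} {B : ℝ}
    (hB : ∀ i, ‖x i‖ ≤ B) : ∃ u, WeakTendsto x U u := by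
  have hbound : ∀ w i, |⟪x i, w⟫| ≤ B * ‖w‖ := fun w i =>
    (abs_real_inner_le_norm _ _).trans (mul_le_mul_of_nonneg_right (hB i) (norm_nonneg w))
  have hlim : ∀ w, ∃ L, Tendsto (fun i => ⟪x i, w⟫) U (𝓝 L) := by
    intro w
    obtain ⟨L, -, hL⟩ := (isCompact_Icc (a := -(B * ‖w‖)) (b := B * ‖w‖)).ultrafilter_le_nhds
      (U.map fun i => ⟪x i, w⟫)
      (by rw [Ultrafilter.coe_map, le_principal_iff, mem_map]
          exact univ_mem' fun i => abs_le.1 (hbound w i))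
    rw [Ultrafilter.coe_map] at hL
    exact ⟨L, hL⟩
  choose L hL using hlim
  let φ : E →L[ℝ] ℝ := LinearMap.mkContinuous
    { toFun := L
      map_add' := fun w w' => tendsto_nhds_unique (hL (w + w'))
        (by simpa only [inner_add_right] using (hL w).add (hL w'))
      map_smul' := fun a w => tendsto_nhds_unique (hL (a • w))
        (by simpa only [real_inner_smul_right, RingHom.id_apply, smul_eq_mul]
          using (hL w).const_mul a) }
    B fun w => le_of_tendsto (hL w).abs (Eventually.of_forall (hbound w))
  refine ⟨(InnerProductSpace.toDual ℝ E).symm φ, fun w => ?_⟩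
  rw [InnerProductSpace.toDual_symm_apply]
  exact hL w

variable {x : ι → E} {l : Filter ι}

theorem WeakTendsto.eq_of_tendsto_norm_sub {l₁ l₂ : Filter ι} [l₁.NeBot] [l₂.NeBot]
    (h₁ : l₁ ≤ l) (h₂ : l₂ ≤ l) {u v : E} (hu : WeakTendsto x l₁ u) (hv : WeakTendsto x l₂ v)
    {r s : ℝ} (hr : Tendsto (fun i => ‖x i - u‖) l (𝓝 r))
    (hs : Tendsto (fun i => ‖x i - v‖) l (𝓝 s)) : u = v := by
  have hid : ∀ i, 2 * ⟪x i, u - v⟫ = ‖x i - v‖ ^ 2 - ‖x i - u‖ ^ 2 + ‖u‖ ^ 2 - ‖v‖ ^ 2 := by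
    intro i
    rw [norm_sub_sq_real, norm_sub_sq_real, inner_sub_right]
    ring
  have hc : Tendsto (fun i => 2 * ⟪x i, u - v⟫) l (𝓝 (s ^ 2 - r ^ 2 + ‖u‖ ^ 2 - ‖v‖ ^ 2)) := by
    simp only [hid]
    exact (((hs.pow 2).sub (hr.pow 2)).add_const _).sub_const _
  have e₁ := tendsto_nhds_unique ((hu (u - v)).const_mul 2) (hc.mono_left h₁)
  have e₂ := tendsto_nhds_unique ((hv (u - v)).const_mul 2) (hc.mono_left h₂)
  have : ‖u - v‖ ^ 2 = 0 := by
    rw [← real_inner_self_eq_norm_sq, inner_sub_left]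
    linarith
  simpa [sub_eq_zero] using this

theorem exists_weakTendsto_of_tendsto_norm_sub [CompleteSpace E] [l.NeBot] {S : Set E} {B : ℝ}
    (hB : ∀ i, ‖x i‖ ≤ B) (hS : ∀ f ∈ S, ∃ r, Tendsto (fun i => ‖x i - f‖) l (𝓝 r))
    (hcluster : ∀ (U : Ultrafilter ι) u, ↑U ≤ l → WeakTendsto x U u → u ∈ S) :
    ∃ u ∈ S, WeakTendsto x l u := by
  have key : ∀ U : Ultrafilter ι, ↑U ≤ l → ∃ u ∈ S, WeakTendsto x U u := fun U hU =>
    let ⟨u, hu⟩ := exists_weakTendsto_of_norm_le U hB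
    ⟨u, hcluster U u hU hu, hu⟩
  obtain ⟨u, huS, hu⟩ := key (Ultrafilter.of l) (Ultrafilter.of_le l)
  refine ⟨u, huS, fun w => tendsto_iff_ultrafilter _ _ _ |>.2 fun U hU => ?_⟩
  obtain ⟨v, hvS, hv⟩ := key U hU
  obtain ⟨r, hr⟩ := hS u huS
  obtain ⟨s, hs⟩ := hS v hvS
  rw [hu.eq_of_tendsto_norm_sub (Ultrafilter.of_le l) hU hv hr hs]
  exact hv w

theorem LipschitzWith.isFixedPt_of_weakTendsto {T : E → E} (hT : LipschitzWith 1 T) [l.NeBot]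
    {u : E} {B : ℝ} (hB : ∀ i, ‖x i‖ ≤ B) (hx : WeakTendsto x l u)
    (hres : Tendsto (fun i => ‖x i - T (x i)‖) l (𝓝 0)) : IsFixedPt T u := by
  set v := u - T u
  have hineq : ∀ i, 2 * ⟪x i - u, v⟫ + ‖v‖ ^ 2
      ≤ ‖x i - T (x i)‖ ^ 2 + 2 * ‖x i - T (x i)‖ * (B + ‖u‖) := by
    intro i
    have h₁ : ‖x i - T u‖ ≤ ‖x i - T (x i)‖ + ‖x i - u‖ :=
      calc ‖x i - T u‖ = ‖(x i - T (x i)) + (T (x i) - T u)‖ := by rw [sub_add_sub_cancel]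
        _ ≤ ‖x i - T (x i)‖ + ‖T (x i) - T u‖ := norm_add_le _ _
        _ ≤ ‖x i - T (x i)‖ + ‖x i - u‖ := by
          simpa using add_le_add_left (hT.norm_sub_le (x i) u) ‖x i - T (x i)‖
    have h₂ : ‖x i - T u‖ ^ 2 = ‖x i - u‖ ^ 2 + 2 * ⟪x i - u, v⟫ + ‖v‖ ^ 2 := by
      rw [← norm_add_sq_real, sub_add_sub_cancel]
    have h₃ : ‖x i - u‖ ≤ B + ‖u‖ := (_root_.norm_sub_le _ _).trans (by linarith [hB i])
    nlinarith [pow_le_pow_left₀ (norm_nonneg _) h₁ 2,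
      mul_le_mul_of_nonneg_left h₃ (norm_nonneg (x i - T (x i)))]
  have hlhs : Tendsto (fun i => 2 * ⟪x i - u, v⟫ + ‖v‖ ^ 2) l (𝓝 (‖v‖ ^ 2)) := by
    have h : Tendsto (fun i => ⟪x i - u, v⟫) l (𝓝 0) := by
      simpa only [inner_sub_left, sub_self] using (hx v).sub_const ⟪u, v⟫
    simpa using (h.const_mul 2).add_const (‖v‖ ^ 2)
  have hrhs : Tendsto (fun i => ‖x i - T (x i)‖ ^ 2 + 2 * ‖x i - T (x i)‖ * (B + ‖u‖)) l (𝓝 0) := by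
    simpa using (hres.pow 2).add ((hres.const_mul 2).mul_const (B + ‖u‖))
  have hv : ‖v‖ ^ 2 ≤ 0 := le_of_tendsto_of_tendsto' hlhs hrhs hineq
  have : v = 0 := by simpa using hv
  exact (sub_eq_zero.1 this).symm

end WeakConvergence

section KrasnoselskiiMann

variable {E : Type*} [NormedAddCommGroup E] [InnerProductSpace ℝ E]

def FirmlyNonexpansive (T : E → E) : Prop :=
  ∀ x y, ‖T x - T y‖ ^ 2 ≤ ⟪T x - T y, x - y⟫

theorem LipschitzWith.norm_relaxed_sub_le {R : E → E} (hR : LipschitzWith 1 R) {t : ℝ}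
    (ht₀ : 0 ≤ t) (ht₁ : t ≤ 1) (x : E) :
    ‖x + t • (R x - x) - R (x + t • (R x - x))‖ ≤ ‖x - R x‖ := by
  set x' := x + t • (R x - x)
  have hx' : x - x' = t • (x - R x) := by simp only [x']; module
  calc ‖x' - R x'‖ = ‖(1 - t) • (x - R x) + (R x - R x')‖ := by congr 1; simp only [x']; module
    _ ≤ (1 - t) * ‖x - R x‖ + ‖x - x'‖ := by
      refine norm_add_le_of_le ?_ (by simpa using hR.norm_sub_le x x')
      rw [norm_smul, Real.norm_of_nonneg (sub_nonneg.2 ht₁)]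
    _ = ‖x - R x‖ := by rw [hx', norm_smul, Real.norm_of_nonneg ht₀]; ring

namespace FirmlyNonexpansive

variable {T : E → E} (hT : FirmlyNonexpansive T)
include hT

theorem lipschitzWith : LipschitzWith 1 T := by
  refine LipschitzWith.of_dist_le_mul fun x y => ?_
  rw [dist_eq_norm, dist_eq_norm, NNReal.coe_one, one_mul]
  have h := (hT x y).trans (real_inner_le_norm _ _)
  nlinarith [norm_nonneg (T x - T y), norm_nonneg (x - y)]

theorem lipschitzWith_two_smul_sub : LipschitzWith 1 fun x => (2 : ℝ) • T x - x := by
  refine LipschitzWith.of_dist_le_mul fun x y => ?_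
  rw [dist_eq_norm, dist_eq_norm, NNReal.coe_one, one_mul,
    ← pow_le_pow_iff_left₀ (norm_nonneg _) (norm_nonneg _) two_ne_zero]
  have h : (2 : ℝ) • T x - x - ((2 : ℝ) • T y - y) = (2 : ℝ) • (T x - T y) - (x - y) := by module
  rw [h, norm_sub_sq_real, norm_smul, real_inner_smul_left, Real.norm_two]
  nlinarith [hT x y]

theorem norm_relaxed_sub_le {ρ : ℝ} (hρ : ρ ∈ Set.Icc (0 : ℝ) 2) (x : E) :
    ‖x + ρ • (T x - x) - T (x + ρ • (T x - x))‖ ≤ ‖x - T x‖ := by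
  have key := hT.lipschitzWith_two_smul_sub.norm_relaxed_sub_le (t := ρ / 2)
    (by linarith [hρ.1]) (by linarith [hρ.2]) x
  have hx' : x + (ρ / 2) • ((2 : ℝ) • T x - x - x) = x + ρ • (T x - x) := by module
  have hres : ∀ y, y - ((2 : ℝ) • T y - y) = (2 : ℝ) • (y - T y) := fun y => by module
  simp only [hx', hres, norm_smul, Real.norm_two] at key
  exact le_of_mul_le_mul_left key two_pos

theorem norm_relaxed_sub_sq_le {f : E} (hf : IsFixedPt T f) {ρ : ℝ} (hρ : 0 ≤ ρ) (x : E) :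
    ‖x + ρ • (T x - x) - f‖ ^ 2 ≤ ‖x - f‖ ^ 2 - ρ * (2 - ρ) * ‖x - T x‖ ^ 2 := by
  have hfirm : ‖T x - f‖ ^ 2 ≤ ⟪T x - f, x - f⟫ := by simpa [hf.eq] using hT x f
  rw [show x + ρ • (T x - x) - f = (x - f) + ρ • ((T x - f) - (x - f)) by module,
    show x - T x = (x - f) - (T x - f) by abel]
  generalize x - f = d, T x - f = e at hfirm ⊢
  rw [norm_add_sq_real, norm_smul, inner_smul_right, mul_pow, Real.norm_eq_abs, sq_abs,
    norm_sub_sq_real e d, norm_sub_sq_real d e, inner_sub_right, real_inner_self_eq_norm_sq,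
    real_inner_comm d e]
  rw [real_inner_comm] at hfirm
  nlinarith [mul_nonneg hρ (sub_nonneg.2 hfirm)]

theorem exists_weakTendsto_relaxed_iterate [CompleteSpace E] {f₀ : E} (hf₀ : IsFixedPt T f₀)
    {ρ : ℕ → ℝ} (hρ : ∀ i, ρ i ∈ Set.Icc (0 : ℝ) 2)
    (hdiv : ¬ Summable fun i => ρ i * (2 - ρ i)) {z : ℕ → E}
    (hrec : ∀ i, z (i + 1) = z i + ρ i • (T (z i) - z i)) :
    ∃ u, IsFixedPt T u ∧ WeakTendsto z atTop u := by
  have hw : ∀ i, 0 ≤ ρ i * (2 - ρ i) := fun i => mul_nonneg (hρ i).1 (sub_nonneg.2 (hρ i).2)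
  have hstep : ∀ f, IsFixedPt T f → ∀ i,
      ‖z (i + 1) - f‖ ^ 2 ≤ ‖z i - f‖ ^ 2 - ρ i * (2 - ρ i) * ‖z i - T (z i)‖ ^ 2 :=
    fun f hf i => hrec i ▸ hT.norm_relaxed_sub_sq_le hf (hρ i).1 (z i)
  have hfejer : ∀ f, IsFixedPt T f → Antitone fun n => ‖z n - f‖ := fun f hf =>
    antitone_nat_of_succ_le fun n => by
      rw [← pow_le_pow_iff_left₀ (norm_nonneg _) (norm_nonneg _) two_ne_zero]
      nlinarith [hstep f hf n, hw n, sq_nonneg ‖z n - T (z n)‖]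
  have hB : ∀ n, ‖z n‖ ≤ ‖f₀‖ + ‖z 0 - f₀‖ := fun n =>
    (norm_le_norm_add_norm_sub' (z n) f₀).trans (by gcongr; exact hfejer f₀ hf₀ (Nat.zero_le n))
  have hres : Tendsto (fun n => ‖z n - T (z n)‖) atTop (𝓝 0) := by
    have hanti : Antitone fun n => ‖z n - T (z n)‖ ^ 2 := antitone_nat_of_succ_le fun n => by
      rw [hrec n]
      exact pow_le_pow_left₀ (norm_nonneg _) (hT.norm_relaxed_sub_le (hρ n) (z n)) 2
    have hsum := summable_of_le_sub_succ (a := fun n => ρ n * (2 - ρ n) * ‖z n - T (z n)‖ ^ 2)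
      (fun n => mul_nonneg (hw n) (sq_nonneg _)) (fun n => sq_nonneg ‖z n - f₀‖)
      fun n => by linarith [hstep f₀ hf₀ n]
    simpa using (hanti.tendsto_zero_of_summable_mul (fun n => sq_nonneg _) hw hdiv hsum).sqrt
  exact exists_weakTendsto_of_tendsto_norm_sub (S := fixedPoints T) hB
    (fun f hf => ⟨_, tendsto_atTop_ciInf (hfejer f hf) ⟨0, fun _ ⟨_, h⟩ => h ▸ norm_nonneg _⟩⟩)
    fun U u hU hu => hT.lipschitzWith.isFixedPt_of_weakTendsto hB hu (hres.mono_left hU)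

end FirmlyNonexpansive

end KrasnoselskiiMann

structure CoerciveSelfAdjointOp (Z : Type*) [NormedAddCommGroup Z] [InnerProductSpace ℝ Z] where
  op : Z →L[ℝ] Z
  inner_op_left : ∀ x y, ⟪op x, y⟫ = ⟪x, op y⟫
  exists_coercive : ∃ δ > 0, ∀ x, δ * ‖x‖ ^ 2 ≤ ⟪x, op x⟫

namespace CoerciveSelfAdjointOp

variable {Z : Type*} [NormedAddCommGroup Z] [InnerProductSpace ℝ Z] (P : CoerciveSelfAdjointOp Z)

def oneSubSmul (Q : Z →L[ℝ] Z) (hQ : ∀ x y, ⟪Q x, y⟫ = ⟪x, Q y⟫) {γ : ℝ} (hγ : |γ| * ‖Q‖ < 1) :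
    CoerciveSelfAdjointOp Z where
  op := 1 - γ • Q
  inner_op_left x y := by
    simp only [sub_apply, one_apply_eq_self, smul_apply, inner_sub_left, inner_sub_right,
      real_inner_smul_left, real_inner_smul_right, hQ]
  exists_coercive := by
    refine ⟨1 - |γ| * ‖Q‖, sub_pos.2 hγ, fun x => ?_⟩
    have h : γ * ⟪x, Q x⟫ ≤ |γ| * ‖Q‖ * ‖x‖ ^ 2 :=
      calc γ * ⟪x, Q x⟫ ≤ |γ| * |⟪x, Q x⟫| := by rw [← abs_mul]; exact le_abs_self _
        _ ≤ |γ| * (‖x‖ * (‖Q‖ * ‖x‖)) := by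
          gcongr
          exact (abs_real_inner_le_norm _ _).trans (by gcongr; exact Q.le_opNorm x)
        _ = |γ| * ‖Q‖ * ‖x‖ ^ 2 := by ring
    simp only [sub_apply, one_apply_eq_self, smul_apply, inner_sub_right, real_inner_smul_right,
      real_inner_self_eq_norm_sq]
    linarith

/-- `Z` with the equivalent inner product `⟪x, y⟫_P = ⟪x, P y⟫`. -/
def Space (_ : CoerciveSelfAdjointOp Z) : Type _ := Z

instance : AddCommGroup P.Space := inferInstanceAs (AddCommGroup Z)

instance : Module ℝ P.Space := inferInstanceAs (Module ℝ Z)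

def toSpaceₗ : Z ≃ₗ[ℝ] P.Space := LinearEquiv.refl ℝ Z

theorem inner_op_self_nonneg (x : Z) : 0 ≤ ⟪x, P.op x⟫ := by
  obtain ⟨δ, hδ, h⟩ := P.exists_coercive
  exact (by positivity : 0 ≤ δ * ‖x‖ ^ 2).trans (h x)

instance : InnerProductSpace.Core ℝ P.Space where
  inner x y := ⟪P.toSpaceₗ.symm x, P.op (P.toSpaceₗ.symm y)⟫
  conj_inner_symm x y := by
    rw [conj_trivial, ← P.inner_op_left, real_inner_comm]
  re_inner_nonneg x := P.inner_op_self_nonneg _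
  add_left x y z := by simp only [map_add, inner_add_left]
  smul_left x y r := by simp only [map_smul, real_inner_smul_left, conj_trivial]
  definite x hx := by
    obtain ⟨δ, hδ, h⟩ := P.exists_coercive
    have : ‖P.toSpaceₗ.symm x‖ ^ 2 ≤ 0 := nonpos_of_mul_nonpos_right ((h _).trans hx.le) hδ
    simpa using this

noncomputable instance : NormedAddCommGroup P.Space :=
  InnerProductSpace.Core.toNormedAddCommGroup (𝕜 := ℝ)

noncomputable instance : InnerProductSpace ℝ P.Space := InnerProductSpace.ofCore _

theorem norm_toSpaceₗ_sq (x : Z) : ‖P.toSpaceₗ x‖ ^ 2 = ⟪x, P.op x⟫ := by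
  rw [← real_inner_self_eq_norm_sq]
  rfl

noncomputable def toSpace : Z ≃L[ℝ] P.Space where
  toLinearEquiv := P.toSpaceₗ
  continuous_toFun := AddMonoidHomClass.continuous_of_bound P.toSpaceₗ √‖P.op‖ fun x => by
    rw [← pow_le_pow_iff_left₀ (norm_nonneg _) (by positivity) two_ne_zero, mul_pow,
      Real.sq_sqrt (norm_nonneg _), norm_toSpaceₗ_sq]
    calc ⟪x, P.op x⟫ ≤ ‖x‖ * ‖P.op x‖ := real_inner_le_norm _ _
      _ ≤ ‖x‖ * (‖P.op‖ * ‖x‖) := by gcongr; exact P.op.le_opNorm x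
      _ = ‖P.op‖ * ‖x‖ ^ 2 := by ring
  continuous_invFun := by
    obtain ⟨δ, hδ, h⟩ := P.exists_coercive
    refine AddMonoidHomClass.continuous_of_bound P.toSpaceₗ.symm (√δ)⁻¹ fun y => ?_
    obtain ⟨x, rfl⟩ := P.toSpaceₗ.surjective y
    rw [LinearEquiv.symm_apply_apply, le_inv_mul_iff₀ (by positivity),
      ← pow_le_pow_iff_left₀ (by positivity) (norm_nonneg _) two_ne_zero, mul_pow,
      Real.sq_sqrt hδ.le, norm_toSpaceₗ_sq]
    exact h x

theorem inner_toSpace (x y : Z) : ⟪P.toSpace x, P.toSpace y⟫ = ⟪x, P.op y⟫ := rfl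

instance [CompleteSpace Z] : CompleteSpace P.Space :=
  (completeSpace_congr (e := P.toSpace.toLinearEquiv.toEquiv) P.toSpace.isUniformEmbedding).1 ‹_›

theorem exists_weakTendsto_relaxed_iterate [CompleteSpace Z] {T : Z → Z}
    (hT : ∀ x y, ⟪T x - T y, P.op (T x - T y)⟫ ≤ ⟪T x - T y, P.op (x - y)⟫)
    {f₀ : Z} (hf₀ : IsFixedPt T f₀) {ρ : ℕ → ℝ} (hρ : ∀ i, ρ i ∈ Set.Icc (0 : ℝ) 2)
    (hdiv : ¬ Summable fun i => ρ i * (2 - ρ i)) {z : ℕ → Z}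
    (hrec : ∀ i, z (i + 1) = z i + ρ i • (T (z i) - z i)) :
    ∃ u, IsFixedPt T u ∧ WeakTendsto z atTop u := by
  set T' : P.Space → P.Space := fun x => P.toSpace (T (P.toSpace.symm x))
  have hT'_apply : ∀ x, T' (P.toSpace x) = P.toSpace (T x) := fun x => by
    simp only [T', ContinuousLinearEquiv.symm_apply_apply]
  have hfix : ∀ x, IsFixedPt T' (P.toSpace x) ↔ IsFixedPt T x := fun x => by
    rw [IsFixedPt, IsFixedPt, hT'_apply, P.toSpace.injective.eq_iff]
  have hT' : FirmlyNonexpansive T' := by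
    intro x y
    obtain ⟨x, rfl⟩ := P.toSpace.surjective x
    obtain ⟨y, rfl⟩ := P.toSpace.surjective y
    rw [hT'_apply, hT'_apply, ← map_sub, ← map_sub, ← real_inner_self_eq_norm_sq, inner_toSpace,
      inner_toSpace]
    exact hT x y
  obtain ⟨u, hu, hzu⟩ := hT'.exists_weakTendsto_relaxed_iterate ((hfix f₀).2 hf₀) hρ hdiv
    (z := fun i => P.toSpace (z i))
    fun i => by simp only [hrec, hT'_apply, map_add, map_smul, map_sub]
  obtain ⟨u, rfl⟩ := P.toSpace.surjective u
  refine ⟨u, (hfix u).1 hu, ?_⟩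
  simpa [comp_def] using hzu.map (P.toSpace.symm : P.Space →L[ℝ] Z)

end CoerciveSelfAdjointOp

namespace SetValuedMonotone

variable {Z : Type*} [NormedAddCommGroup Z] [InnerProductSpace ℝ Z] {M : Z → Set Z}
  (hM : SetValuedMonotone M) {γ : ℝ} (hγ : 0 < γ) {J : Z → Z}
  (hJ : ∀ z, γ⁻¹ • (z - J z) ∈ M (J z))
include hM hγ hJ

theorem firmlyNonexpansive_resolvent : FirmlyNonexpansive J := by
  intro x y
  have h := hM (hJ x) (hJ y)
  rw [← smul_sub, real_inner_smul_right, show x - J x - (y - J y) = (x - y) - (J x - J y) by abel,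
    inner_sub_right, real_inner_self_eq_norm_sq] at h
  exact sub_nonneg.1 (nonneg_of_mul_nonneg_right h (inv_pos.2 hγ))

theorem resolvent_eq_iff {u p : Z} : J u = p ↔ γ⁻¹ • (u - p) ∈ M p := by
  refine ⟨fun h => h ▸ hJ u, fun hp => ?_⟩
  have h := hM (hJ u) hp
  rw [← smul_sub, real_inner_smul_right, show u - J u - (u - p) = -(J u - p) by abel,
    inner_neg_right, real_inner_self_eq_norm_sq] at h
  have : ‖J u - p‖ ^ 2 ≤ 0 := by nlinarith [inv_pos.2 hγ]
  simpa [sub_eq_zero] using this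

theorem isFixedPt_forwardBackward_iff {C : Z → Z} {x : Z} :
    IsFixedPt (fun x => J (x - γ • C x)) x ↔ -C x ∈ M x := by
  rw [IsFixedPt, resolvent_eq_iff hM hγ hJ, sub_sub_cancel_left, smul_neg, inv_smul_smul₀ hγ.ne']

theorem inner_forwardBackward_sub_le {Q : Z →L[ℝ] Z} (hQ : ∀ x, 0 ≤ ⟪x, Q x⟫) {c : Z}
    {C : Z → Z} (hC : ∀ z, C z = Q z + c) (x y : Z) :
    ⟪J (x - γ • C x) - J (y - γ • C y), (1 - γ • Q) (J (x - γ • C x) - J (y - γ • C y))⟫ ≤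
      ⟪J (x - γ • C x) - J (y - γ • C y), (1 - γ • Q) (x - y)⟫ := by
  set d := J (x - γ • C x) - J (y - γ • C y)
  have hfirm := firmlyNonexpansive_resolvent hM hγ hJ (x - γ • C x) (y - γ • C y)
  have harg : x - γ • C x - (y - γ • C y) = (1 - γ • Q) (x - y) := by
    simp only [hC, sub_apply, one_apply_eq_self, smul_apply, map_sub]
    module
  rw [harg] at hfirm
  refine le_trans ?_ hfirm
  simp only [sub_apply, one_apply_eq_self, smul_apply, inner_sub_right, real_inner_smul_right,
    real_inner_self_eq_norm_sq]
  nlinarith [hQ d]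

end SetValuedMonotone

theorem forward_backward_convergence_affine_general {Z : Type*} [NormedAddCommGroup Z]
    [InnerProductSpace ℝ Z] [CompleteSpace Z]
    (M : Z → Set Z) (hM : SetValuedMaximallyMonotone M)
    (Q : Z →L[ℝ] Z) (hQsa : ∀ x y : Z, (⟪Q x, y⟫ : ℝ) = ⟪x, Q y⟫)
    (hQpos : ∀ x : Z, (0 : ℝ) ≤ ⟪x, Q x⟫)
    (c : Z) (C : Z → Z) (hC : ∀ z : Z, C z = Q z + c)
    (hzero : ∃ z : Z, -C z ∈ M z)
    (γ : ℝ) (hγ0 : 0 < γ) (hγ : γ < ‖Q‖⁻¹)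
    (J : Z → Z) (hJ : ∀ z : Z, γ⁻¹ • (z - J z) ∈ M (J z))
    (ρ : ℕ → ℝ) (hρ : ∀ i, ρ i ∈ Set.Icc (0 : ℝ) 2)
    (hdiv : ¬ Summable (fun i => ρ i * (2 - ρ i)))
    (z : ℕ → Z) (hrec : ∀ i, z (i + 1) = z i + ρ i • (J (z i - γ • C (z i)) - z i)) :
    ∃ zstar : Z, -C zstar ∈ M zstar ∧
      ∀ w : Z, Tendsto (fun i => (⟪z i, w⟫ : ℝ)) atTop (nhds ⟪zstar, w⟫) := by
  have hγQ : |γ| * ‖Q‖ < 1 := by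
    rw [abs_of_pos hγ0]
    rcases (norm_nonneg Q).eq_or_lt with hQ | hQ
    · simp [← hQ]
    · calc γ * ‖Q‖ < ‖Q‖⁻¹ * ‖Q‖ := by gcongr
        _ = 1 := inv_mul_cancel₀ hQ.ne'
  have hfix : ∀ x, IsFixedPt (fun x => J (x - γ • C x)) x ↔ -C x ∈ M x := fun x =>
    hM.1.isFixedPt_forwardBackward_iff hγ0 hJ
  obtain ⟨z₀, hz₀⟩ := hzero
  obtain ⟨u, hu, hzu⟩ :=
    (CoerciveSelfAdjointOp.oneSubSmul Q hQsa hγQ).exists_weakTendsto_relaxed_iterate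
      (hM.1.inner_forwardBackward_sub_le hγ0 hJ hQpos hC) ((hfix z₀).2 hz₀) hρ hdiv hrec
  exact ⟨u, (hfix u).1 hu, hzu⟩

/-- **Relaxed forward–backward algorithm, affine case.** Let `M` be maximally monotone and
`C z = Q z + c` with `Q` self-adjoint positive bounded nonzero, `ξ = 1/‖Q‖`, and suppose
`M + C` has a zero. For `γ ∈ (0, ξ)` and any sequence `(ρ i)` in `[0, 2]` with
`Σ_i ρ i (2 - ρ i) = +∞`, the iteration
`z (i+1) = z i + ρ i • (J_{γM}(z i - γ C (z i)) - z i)` converges weakly to a zero of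
`M + C`. -/
theorem forward_backward_convergence_affine {Z : Type*} [NormedAddCommGroup Z]
    [InnerProductSpace ℝ Z] [CompleteSpace Z]
    (M : Z → Set Z) (hM : SetValuedMaximallyMonotone M)
    (Q : Z →L[ℝ] Z) (hQsa : ∀ x y : Z, (⟪Q x, y⟫ : ℝ) = ⟪x, Q y⟫)
    (hQpos : ∀ x : Z, (0 : ℝ) ≤ ⟪x, Q x⟫) (hQne : Q ≠ 0)
    (c : Z) (C : Z → Z) (hC : ∀ z : Z, C z = Q z + c)
    (hzero : ∃ z : Z, -C z ∈ M z)
    (γ : ℝ) (hγ0 : 0 < γ) (hγ : γ < ‖Q‖⁻¹)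
    (J : Z → Z) (hJ : ∀ z : Z, γ⁻¹ • (z - J z) ∈ M (J z))
    (ρ : ℕ → ℝ) (hρ : ∀ i, ρ i ∈ Set.Icc (0 : ℝ) 2)
    (hdiv : ¬ Summable (fun i => ρ i * (2 - ρ i)))
    (z : ℕ → Z) (hrec : ∀ i, z (i + 1) = z i + ρ i • (J (z i - γ • C (z i)) - z i)) :
    ∃ zstar : Z, -C zstar ∈ M zstar ∧
      ∀ w : Z, Tendsto (fun i => (⟪z i, w⟫ : ℝ)) atTop (nhds ⟪zstar, w⟫) :=
  forward_backward_convergence_affine_general M hM Q hQsa hQpos c C hC hzero γ hγ0 hγ J hJ ρ hρ hdiv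
    z hrec
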